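/- Let R be an exchange ring and n ≥ 1 a positive integer. Then for any twosided ideal I of R, the commutator subgroup [E_n(R), C_n(R,I)] is contained in E_n(R,I). -/

import Mathlib

open Matrix

/-- An exchange ring: for every `x` there is an idempotent `e ∈ xR` with `1 - e ∈ (1-x)R`. -/
def IsExchangeRing (R : Type*) [Ring R] : Prop :=
  ∀ x : R, ∃ e r s : R, e * e = e ∧ e = x * r ∧ 1 - e = (1 - x) * s

/-- The elementary transvection `t_{ij}(x) = e + x e^{ij}` as an element of `GL n R`. -/
def transv {n : ℕ} {R : Type*} [Ring R] (i j : Fin n) (hij : i ≠ j) (x : R) :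
    (Matrix (Fin n) (Fin n) R)ˣ :=
  ⟨1 + Matrix.single i j x, 1 + Matrix.single i j (-x),
    by
      have h0 := (Matrix.single_mul_single_of_ne (c := x) i j i hij.symm (-x) :
          Matrix.single i j x * Matrix.single i j (-x) = 0)
      have h1 := (Matrix.single_mul_single_of_ne (c := -x) i j i hij.symm x :
          Matrix.single i j (-x) * Matrix.single i j x = 0)
      simp [mul_add, add_mul, h0, h1, ← Matrix.single_add, add_assoc],
    by
      have h0 := (Matrix.single_mul_single_of_ne (c := x) i j i hij.symm (-x) :
          Matrix.single i j x * Matrix.single i j (-x) = 0)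
      have h1 := (Matrix.single_mul_single_of_ne (c := -x) i j i hij.symm x :
          Matrix.single i j (-x) * Matrix.single i j x = 0)
      simp [mul_add, add_mul, h0, h1, ← Matrix.single_add, add_assoc]⟩

/-- The elementary subgroup `E_n(R)` of `GL_n(R)`. -/
def elemGroup (n : ℕ) (R : Type*) [Ring R] : Subgroup ((Matrix (Fin n) (Fin n) R)ˣ) :=
  Subgroup.closure { g | ∃ i j : Fin n, ∃ hij : i ≠ j, ∃ x : R, g = transv i j hij x }

/-- The preelementary subgroup `E_n(I)` of level a two-sided ideal `I`. -/
def preElem (n : ℕ) (R : Type*) [Ring R] (I : TwoSidedIdeal R) : Subgroup ((Matrix (Fin n) (Fin n) R)ˣ) :=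
  Subgroup.closure { g | ∃ i j : Fin n, ∃ hij : i ≠ j, ∃ x ∈ I, g = transv i j hij x }

/-- The relative elementary subgroup `E_n(R,I)`: the normal closure of `E_n(I)` in `E_n(R)`. -/
def relElem (n : ℕ) (R : Type*) [Ring R] (I : TwoSidedIdeal R) : Subgroup ((Matrix (Fin n) (Fin n) R)ˣ) :=
  Subgroup.closure { g | ∃ τ ∈ elemGroup n R, ∃ ε ∈ preElem n R I, g = τ⁻¹ * ε * τ }

/-- The full congruence subgroup `C_n(R,I)`: preimage of the center of `GL_n(R/I)`. -/
def congrSubgroup (n : ℕ) (R : Type*) [Ring R] (I : TwoSidedIdeal R) :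
    Subgroup ((Matrix (Fin n) (Fin n) R)ˣ) :=
  Subgroup.comap
    (Units.map ((RingHom.mapMatrix (RingCon.mk' I.ringCon)).toMonoidHom :
      Matrix (Fin n) (Fin n) R →* Matrix (Fin n) (Fin n) I.ringCon.Quotient))
    (Subgroup.center ((Matrix (Fin n) (Fin n) I.ringCon.Quotient)ˣ))

/-- `x` is a product of `m` `H`-conjugates of `a` and `a⁻¹`. -/
def IsProdConj {G : Type*} [Group G] (H : Subgroup G) (a x : G) (m : ℕ) : Prop :=
  ∃ f : Fin m → G, (∀ k, ∃ h ∈ H, f k = h⁻¹ * a * h ∨ f k = h⁻¹ * a⁻¹ * h) ∧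
    x = (List.ofFn f).prod


/-!
For a transvection `t = t_ij(x)` and `u ∈ C_n(R,I)` one has `⁅t, u⁆ = t (1 - v (x w))`, where
`v` is column `i` of `u` and `w` is row `j` of `u⁻¹`: so `w v = 0`, the row `w` is unimodular,
`v_l ∈ I` for `l ≠ i`, `w_l ∈ I` for `l ≠ j`, and `v_i x w_j ≡ x` modulo `I` because `u` is
scalar modulo `I`.

The exchange property turns the unimodular row `w` into complete orthogonal idempotents
`h_l = w_l σ_l`, and these cut `v` into columns `B_l` with `w B_l = 0` and `∑ B_l = v`, each of
them an elementary column operation `τ_l` applied to a multiple `ξ_l` of the `l`-th unit vector.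
Hence `1 - v (x w) = ∏_l (1 - B_l (x w))`, and `1 - B_l (x w)` is the `τ_l`-conjugate of
`1 - e_l ξ_l b` with `b = x w τ_l`. That matrix differs from `1` only in row `l`, and it is a
product of row transvections and the diagonal commutator `⁅t_lp(-ξ_l), t_pl(b_l)⁆` (note that
`b_l ξ_l = x w B_l = 0`). For `l ≠ i` everything in row `l` is a multiple of `ξ_l ∈ I`, so the
factor lies in `E_n(R,I)`; the factor `l = i` only does so after multiplication by `t`, which
turns its `(i,j)` entry into `x - ξ_i x w_j ∈ I`.
Finally `E_n(R)` normalizes `E_n(R,I)`, so the commutators with all of `E_n(R)` follow.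
-/

section General

lemma OrthogonalIdempotents.mul_of_eq_mul {R ι : Type*} [Ring R] {g y : ι → R} {f : R}
    (hg : OrthogonalIdempotents g) (hgy : ∀ k, g k = f * y k) (hgf : ∀ k, g k * f = g k) :
    OrthogonalIdempotents (fun k => y k * g k) := by
  classical
  rw [OrthogonalIdempotents.iff_mul_eq]
  intro k l
  have : g k * y l = g k * g l := by rw [hgy l, ← mul_assoc, hgf]
  rw [mul_assoc, ← mul_assoc (g k), this, mul_assoc, (hg.idem l).eq, hg.mul_eq]
  split_ifs <;> simp

lemma OrthogonalIdempotents.option_mul_one_sub_sum {R ι : Type*} [Ring R] [Fintype ι]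
    {p : ι → R} (hp : OrthogonalIdempotents p) {η : R} (hη : IsIdempotentElem η)
    (hpη : (∑ k, p k) * η = 0) :
    OrthogonalIdempotents (Option.elim · (η * (1 - ∑ k, p k)) p) := by
  have hx₂ : (∑ k, p k) * (η * (1 - ∑ k, p k)) = 0 := by rw [← mul_assoc, hpη, zero_mul]
  refine hp.option _ ?_ ?_ hx₂
  · rw [IsIdempotentElem, mul_assoc, sub_mul (1 : R), one_mul, hx₂, sub_zero, ← mul_assoc,
      hη.eq]
  · rw [mul_assoc, sub_mul, one_mul, hp.isIdempotentElem_sum.eq, sub_self, mul_zero]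

lemma one_add_mul_one_add_of_mul_eq_zero {A : Type*} [Ring A] {a b : A} (h : a * b = 0) :
    (1 + a) * (1 + b) = 1 + (a + b) := by
  rw [add_mul, one_mul, mul_add, mul_one, h, add_zero]; abel

lemma Submonoid.one_add_sum_mem {A ι : Type*} [Ring A] (S : Submonoid A) {s : Finset ι}
    {N : ι → A} (hN : (s : Set ι).Pairwise fun a b => N a * N b = 0)
    (hS : ∀ a ∈ s, 1 + N a ∈ S) : 1 + ∑ a ∈ s, N a ∈ S := by
  classical
  induction s using Finset.induction_on with
  | empty => simp
  | insert a s ha ih =>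
    rw [Finset.sum_insert ha, ← one_add_mul_one_add_of_mul_eq_zero]
    · exact S.mul_mem (hS a (Finset.mem_insert_self a s))
        (ih (hN.mono (by simp)) fun b hb => hS b (Finset.mem_insert_of_mem hb))
    · rw [Finset.mul_sum]
      exact Finset.sum_eq_zero fun b hb =>
        hN (by simp) (by simp [hb]) (ne_of_mem_of_not_mem hb ha).symm

lemma Units.mul_mul_eq_conj_mul {M : Type*} [Monoid M] (t : Mˣ) (a b : M) :
    ↑t * (a * b) = ↑t * a * ↑t⁻¹ * (↑t * b) := by
  simp only [mul_assoc, Units.inv_mul_cancel_left]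

open scoped commutatorElement in
lemma Subgroup.commutator_closure_le {G : Type*} [Group G] {S : Set G} {H K : Subgroup G}
    (hK : ∀ g ∈ closure S, ∀ k ∈ K, g * k * g⁻¹ ∈ K) (hSH : ∀ s ∈ S, ∀ h ∈ H, ⁅s, h⁆ ∈ K) :
    ⁅closure S, H⁆ ≤ K := by
  rw [commutator_le]
  intro g hg h hh
  induction hg using closure_induction with
  | mem s hs => exact hSH s hs h hh
  | one => rw [commutatorElement_one_left]; exact one_mem K
  | mul a b ha _ iha ihb =>
    rw [commutatorElement_mul_left_eq_conj_mul]
    exact mul_mem (hK a ha _ ihb) iha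
  | inv a ha iha =>
    rw [commutatorElement_inv_left, ← commutatorElement_inv]
    simpa using hK a⁻¹ (inv_mem ha) _ (inv_mem iha)

lemma vecMulVec_mul_vecMulVec_eq_zero {R ι : Type*} [Ring R] [Fintype ι] {a b q r : ι → R}
    (h : q ⬝ᵥ b = 0) : vecMulVec a q * vecMulVec b r = 0 := by
  rw [vecMulVec_mul_vecMulVec, h, zero_smul, vecMulVec_zero]

lemma TwoSidedIdeal.mk'_ringCon_eq_zero_iff {R : Type*} [Ring R] {I : TwoSidedIdeal R} {x : R} :
    RingCon.mk' I.ringCon x = 0 ↔ x ∈ I := by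
  change (x : I.ringCon.Quotient) = ((0 : R) : I.ringCon.Quotient) ↔ _
  rw [RingCon.eq, TwoSidedIdeal.rel_iff, sub_zero]

end General

namespace IsExchangeRing

variable {R : Type*} [Ring R]

lemma exists_corner (hR : IsExchangeRing R) {f x : R} (hf : IsIdempotentElem f)
    (hfx : f * x = x) :
    ∃ η, IsIdempotentElem η ∧ (∃ t, η = x * t) ∧ (∃ s, f - η = (f - x) * s) ∧
      f * η = η ∧ η * f = η := by
  obtain ⟨e, r, s, he, her, hes⟩ := hR (x + 1 - f)
  rw [show (1 : R) - (x + 1 - f) = f - x by abel] at hes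
  have hfe : f * e = e + f - 1 := by
    have : f * (1 - e) = 1 - e := by rw [hes, ← mul_assoc, mul_sub, hf.eq, hfx]
    calc f * e = f - f * (1 - e) := by noncomm_ring
      _ = e + f - 1 := by rw [this]; abel
  have hfef : f * e * f = e * f := by
    rw [hfe, sub_mul, add_mul, hf.eq, one_mul]; abel
  refine ⟨e * f, ?_, ⟨r * f, ?_⟩, ⟨s * f, ?_⟩, ?_, ?_⟩
  · calc e * f * (e * f) = e * (f * e) * f := by noncomm_ring
      _ = (e * e + e * f - e) * f := by rw [hfe]; noncomm_ring
      _ = e * f := by rw [he, add_sub_cancel_left, mul_assoc, hf.eq]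
  · have hfy : f * (x + 1 - f) = x := by rw [mul_sub, mul_add, hfx, mul_one, hf.eq]; abel
    rw [← hfef, her, ← mul_assoc f, hfy, mul_assoc]
  · rw [← mul_assoc, ← hes, sub_mul, one_mul]
  · rw [← mul_assoc, hfef]
  · rw [mul_assoc, hf.eq]

lemma exists_orthogonalIdempotents_corner (hR : IsExchangeRing R) (m : ℕ) :
    ∀ {f : R}, IsIdempotentElem f → ∀ a : Fin m → R, (∀ k, f * a k = a k) → ∑ k, a k = f →
      ∃ h : Fin m → R, OrthogonalIdempotents h ∧ ∑ k, h k = f ∧ ∀ k, ∃ c, h k = a k * c := by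
  induction m with
  | zero =>
    intro f _ a _ ha
    exact ⟨0, ⟨fun k => k.elim0, fun k => k.elim0⟩, by simpa using ha, fun k => k.elim0⟩
  | succ m ih =>
    intro f hf a hfa ha
    obtain ⟨η, hη, ⟨t, hηt⟩, ⟨s, hs⟩, hfη, hηf⟩ := hR.exists_corner hf (hfa 0)
    obtain ⟨f', hf'def⟩ : ∃ f', f' = f - η := ⟨_, rfl⟩
    rw [← hf'def] at hs
    have hf' : IsIdempotentElem f' := by
      rw [IsIdempotentElem, hf'def, mul_sub, sub_mul, sub_mul, hf.eq, hfη, hηf, hη.eq, sub_self,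
        sub_zero]
    have hf'sum : ∑ k : Fin m, a k.succ * s = f' := by
      rw [← Finset.sum_mul, hs, ← ha, Fin.sum_univ_succ, add_sub_cancel_left]
    -- the remaining summands, cut down to the corner `f' R f'`
    obtain ⟨g, hg, hgsum, hgc⟩ := ih hf' (fun k => f' * (a k.succ * s) * f')
      (fun k => by simp only [← mul_assoc, hf'.eq])
      (by rw [← Finset.sum_mul, ← Finset.mul_sum, hf'sum, hf'.eq, hf'.eq])
    choose c hc using hgc
    obtain ⟨y, hy⟩ : ∃ y : Fin m → R, y = fun k => a k.succ * s * f' * c k := ⟨_, rfl⟩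
    have hgy : ∀ k, g k = f' * y k := fun k => by rw [hc, hy]; simp only [mul_assoc]
    have hgf' : ∀ k, g k * f' = g k := fun k => by
      rw [← hgsum, hg.mul_sum_of_mem (Finset.mem_univ k)]
    obtain ⟨p, hpdef⟩ : ∃ p : Fin m → R, p = fun k => y k * g k := ⟨_, rfl⟩
    have hp : OrthogonalIdempotents p := hpdef ▸ hg.mul_of_eq_mul hgy hgf'
    have hpη : (∑ k, p k) * η = 0 := by
      have hf'η : f' * η = 0 := by rw [hf'def, sub_mul, hfη, hη.eq, sub_self]
      rw [Finset.sum_mul]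
      refine Finset.sum_eq_zero fun k _ => ?_
      rw [hpdef, mul_assoc, ← hgf' k, mul_assoc, hf'η, mul_zero, mul_zero]
    have hsp : (1 - η) * ∑ k, p k = f' := by
      have hfp : ∀ k, f * p k = p k := fun k => by simp only [hpdef, hy, ← mul_assoc, hfa]
      rw [Finset.mul_sum, ← hgsum]
      refine Finset.sum_congr rfl fun k _ => ?_
      calc (1 - η) * p k = (1 - f) * p k + f' * p k := by rw [hf'def]; noncomm_ring
        _ = g k := by
          rw [sub_mul, one_mul, hfp, sub_self, zero_add, hpdef, ← mul_assoc, ← hgy,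
            (hg.idem k).eq]
    refine ⟨fun k => Option.elim (finSuccEquiv m k) (η * (1 - ∑ k, p k)) p,
      (OrthogonalIdempotents.equiv (finSuccEquiv m)).mpr (hp.option_mul_one_sub_sum hη hpη),
      ?_, fun k => ?_⟩
    · rw [Fin.sum_univ_succ]
      simp only [finSuccEquiv_zero, finSuccEquiv_succ, Option.elim_none, Option.elim_some]
      calc η * (1 - ∑ k, p k) + ∑ k, p k = η + (1 - η) * ∑ k, p k := by noncomm_ring
        _ = f := by rw [hsp, hf'def, add_sub_cancel]
    · induction k using Fin.cases with
      | zero => exact ⟨t * (1 - ∑ k, p k), by simp [hηt, mul_assoc]⟩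
      | succ k => exact ⟨s * f' * c k * g k, by simp [hpdef, hy, mul_assoc]⟩

lemma exists_completeOrthogonalIdempotents (hR : IsExchangeRing R) {m : ℕ} {a b : Fin m → R}
    (hab : a ⬝ᵥ b = 1) :
    ∃ h : Fin m → R, CompleteOrthogonalIdempotents h ∧ ∀ k, ∃ c, h k = a k * c := by
  obtain ⟨h, hh, hsum, hc⟩ := hR.exists_orthogonalIdempotents_corner m IsIdempotentElem.one
    (fun k => a k * b k) (fun k => one_mul _) hab
  refine ⟨h, ⟨hh, hsum⟩, fun k => ?_⟩
  obtain ⟨c, hc⟩ := hc k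
  exact ⟨b k * c, by rw [hc, mul_assoc]⟩

end IsExchangeRing

section ElementarySubgroups

variable {n : ℕ} {R : Type*} [Ring R] {I : TwoSidedIdeal R}

lemma coe_transv (i j : Fin n) (hij : i ≠ j) (x : R) :
    (transv i j hij x : Matrix (Fin n) (Fin n) R) = 1 + single i j x := rfl

lemma coe_transv_inv (i j : Fin n) (hij : i ≠ j) (x : R) :
    ((transv i j hij x)⁻¹ : (Matrix (Fin n) (Fin n) R)ˣ) = 1 + single i j (-x) := rfl

lemma transv_mem_elemGroup (i j : Fin n) (hij : i ≠ j) (x : R) :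
    transv i j hij x ∈ elemGroup n R :=
  Subgroup.subset_closure ⟨i, j, hij, x, rfl⟩

lemma transv_mem_preElem (i j : Fin n) (hij : i ≠ j) {x : R} (hx : x ∈ I) :
    transv i j hij x ∈ preElem n R I :=
  Subgroup.subset_closure ⟨i, j, hij, x, hx, rfl⟩

lemma preElem_le_relElem : preElem n R I ≤ relElem n R I :=
  fun g hg => Subgroup.subset_closure ⟨1, one_mem _, g, hg, by group⟩

lemma conj_mem_relElem {g d : (Matrix (Fin n) (Fin n) R)ˣ} (hg : g ∈ elemGroup n R)
    (hd : d ∈ relElem n R I) : g * d * g⁻¹ ∈ relElem n R I := by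
  refine (Subgroup.closure_le (K := (relElem n R I).comap (MulAut.conj g).toMonoidHom)).mpr
    ?_ hd
  rintro _ ⟨τ, hτ, ε, hε, rfl⟩
  exact Subgroup.subset_closure ⟨τ * g⁻¹, mul_mem hτ (inv_mem hg), ε, hε, by simp; group⟩

open scoped commutatorElement in
lemma commutatorElement_mem_relElem_left {ε g : (Matrix (Fin n) (Fin n) R)ˣ}
    (hε : ε ∈ relElem n R I) (hg : g ∈ elemGroup n R) : ⁅ε, g⁆ ∈ relElem n R I := by
  rw [commutatorElement_def, mul_assoc, mul_assoc, ← mul_assoc g]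
  exact mul_mem hε (conj_mem_relElem hg (inv_mem hε))

open scoped commutatorElement in
lemma commutatorElement_mem_relElem_right {g ε : (Matrix (Fin n) (Fin n) R)ˣ}
    (hg : g ∈ elemGroup n R) (hε : ε ∈ relElem n R I) : ⁅g, ε⁆ ∈ relElem n R I :=
  mul_mem (conj_mem_relElem hg hε) (inv_mem hε)

lemma mul_mul_mem_ofUnits_relElem {A B N : Matrix (Fin n) (Fin n) R}
    (hA : A ∈ (elemGroup n R).ofUnits) (hAB : A * B = 1) (hN : N ∈ (relElem n R I).ofUnits) :
    A * N * B ∈ (relElem n R I).ofUnits := by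
  obtain ⟨g, hg, rfl⟩ := hA
  obtain ⟨d, hd, rfl⟩ := hN
  obtain rfl : B = ↑g⁻¹ := by
    rw [Units.coeHom_apply] at hAB
    rw [← one_mul B, ← g.inv_mul, mul_assoc, hAB, mul_one]
  exact ⟨g * d * g⁻¹, conj_mem_relElem hg hd, rfl⟩

lemma one_add_vecMulVec_single_left_mem_ofUnits {H : Subgroup (Matrix (Fin n) (Fin n) R)ˣ}
    {l : Fin n} {q : Fin n → R} (hql : q l = 0)
    (hH : ∀ m (hlm : l ≠ m), transv l m hlm (q m) ∈ H) :
    1 + vecMulVec (Pi.single l 1) q ∈ H.ofUnits := by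
  have : vecMulVec (Pi.single l 1) q = ∑ m, single l m (q m) := by
    ext a b
    obtain rfl | ha := eq_or_ne a l
    · simp [vecMulVec_apply, Matrix.sum_apply, single_apply, eq_comm]
    · simp [vecMulVec_apply, Matrix.sum_apply, ha, Ne.symm ha]
  rw [this]
  refine Submonoid.one_add_sum_mem _ (fun a _ b _ _ => ?_) fun m _ => ?_
  · obtain rfl | ha := eq_or_ne a l
    · rw [hql, single_zero, zero_mul]
    · simp [ha]
  · obtain rfl | hm := eq_or_ne l m
    · rw [hql, single_zero, add_zero]; exact one_mem _
    · exact ⟨_, hH m hm, rfl⟩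

lemma one_add_vecMulVec_single_right_mem_ofUnits {H : Subgroup (Matrix (Fin n) (Fin n) R)ˣ}
    {l : Fin n} {c : Fin n → R} (hcl : c l = 0)
    (hH : ∀ m (hml : m ≠ l), transv m l hml (c m) ∈ H) :
    1 + vecMulVec c (Pi.single l 1) ∈ H.ofUnits := by
  have : vecMulVec c (Pi.single l 1) = ∑ m, single m l (c m) := by
    ext a b
    obtain rfl | hb := eq_or_ne b l
    · simp [vecMulVec_apply, Matrix.sum_apply, single_apply, eq_comm]
    · simp [vecMulVec_apply, Matrix.sum_apply, hb, Ne.symm hb]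
  rw [this]
  refine Submonoid.one_add_sum_mem _ (fun a _ b _ _ => ?_) fun m _ => ?_
  · obtain rfl | hb := eq_or_ne b l
    · rw [hcl, single_zero, mul_zero]
    · simp [Ne.symm hb]
  · obtain rfl | hm := eq_or_ne m l
    · rw [hcl, single_zero, add_zero]; exact one_mem _
    · exact ⟨_, hH m hm, rfl⟩

end ElementarySubgroups

section RowPieces

variable {n : ℕ} {R : Type*} [Ring R] {I : TwoSidedIdeal R}
open scoped commutatorElement

lemma coe_commutatorElement_transv {l p : Fin n} (hlp : l ≠ p) {α β : R} (hβα : β * α = 0) :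
    ((⁅transv l p hlp α, transv p l hlp.symm β⁆ : (Matrix (Fin n) (Fin n) R)ˣ) :
      Matrix (Fin n) (Fin n) R) = 1 + single l l (α * β) := by
  have hαβα : α * β * α = 0 := by rw [mul_assoc, hβα, mul_zero]
  simp only [commutatorElement_def, Units.val_mul, coe_transv, coe_transv_inv, mul_add, add_mul,
    mul_one, one_mul, single_mul_single_same, ne_eq, hlp, hlp.symm, not_false_eq_true,
    Matrix.single_mul_single_of_ne, add_zero, mul_neg, neg_mul, hβα, hαβα, single_zero,
    ← single_neg]
  abel

lemma one_sub_vecMulVec_single_eq {l p : Fin n} (hlp : l ≠ p) (a : R) (b : Fin n → R)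
    (hba : b l * a = 0) :
    1 - vecMulVec (Pi.single l a) b =
      (1 + vecMulVec (Pi.single l 1) (-(a • Function.update b l 0))) *
        ⁅transv l p hlp (-a), transv p l hlp.symm (b l)⁆ := by
  rw [coe_commutatorElement_transv hlp (by rw [mul_neg, hba, neg_zero]),
    one_add_mul_one_add_of_mul_eq_zero, sub_eq_add_neg]
  · congr 1
    ext r m
    obtain rfl | hr := eq_or_ne r l
    · obtain rfl | hm := eq_or_ne m r
      · simp [vecMulVec_apply]
      · simp [vecMulVec_apply, hm, Ne.symm hm]
    · simp [vecMulVec_apply, hr, Ne.symm hr]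
  · ext r m
    simp only [vecMulVec_apply, Matrix.mul_apply, single_apply, Matrix.zero_apply]
    refine Finset.sum_eq_zero fun j _ => ?_
    split_ifs with h
    · simp [← h.1]
    · rw [mul_zero]

lemma one_sub_vecMulVec_single_mem_relElem {l p : Fin n} (hlp : l ≠ p) {a : R} (ha : a ∈ I)
    {b : Fin n → R} (hba : b l * a = 0) :
    1 - vecMulVec (Pi.single l a) b ∈ (relElem n R I).ofUnits := by
  rw [one_sub_vecMulVec_single_eq hlp a b hba]
  refine mul_mem (Subgroup.ofUnits_mono preElem_le_relElem
    (one_add_vecMulVec_single_left_mem_ofUnits (by simp) fun m _ =>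
      transv_mem_preElem _ _ _ (neg_mem (I.mul_mem_right _ _ ha))))
    ⟨_, commutatorElement_mem_relElem_left (preElem_le_relElem (transv_mem_preElem _ _ _
      (neg_mem ha))) (transv_mem_elemGroup _ _ _ _), rfl⟩

lemma transv_mul_one_sub_vecMulVec_single_mem_relElem {i j : Fin n} (hij : i ≠ j) {x a : R}
    {b : Fin n → R} (hb : ∀ m, m ≠ j → b m ∈ I) (hx : x - a * b j ∈ I) (hba : b i * a = 0) :
    (transv i j hij x : Matrix (Fin n) (Fin n) R) * (1 - vecMulVec (Pi.single i a) b) ∈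
      (relElem n R I).ofUnits := by
  have hrow : (transv i j hij x : Matrix (Fin n) (Fin n) R) *
      (1 + vecMulVec (Pi.single i 1) (-(a • Function.update b i 0))) =
      1 + vecMulVec (Pi.single i 1) (-(a • Function.update b i 0) + Pi.single j x) := by
    rw [coe_transv, one_add_mul_one_add_of_mul_eq_zero]
    · rw [vecMulVec_add, add_comm (single i j x)]
      congr 2
      ext r m
      by_cases hr : i = r <;> by_cases hm : j = m <;> simp [vecMulVec_apply, hr, hm]
    · ext r m
      simp [Matrix.mul_apply, single_apply, vecMulVec_apply, ite_and, hij.symm]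
  rw [one_sub_vecMulVec_single_eq hij a b hba, ← mul_assoc, hrow]
  refine mul_mem (Subgroup.ofUnits_mono preElem_le_relElem
    (one_add_vecMulVec_single_left_mem_ofUnits (by simp [hij]) fun m him =>
      transv_mem_preElem _ _ _ ?_))
    ⟨_, commutatorElement_mem_relElem_right (transv_mem_elemGroup _ _ _ _)
      (preElem_le_relElem (transv_mem_preElem _ _ _ (hb i hij))), rfl⟩
  obtain rfl | hmj := eq_or_ne m j
  · simpa [Function.update_of_ne hij.symm, neg_add_eq_sub] using hx
  · simpa [Function.update_apply, hmj, Ne.symm him] using neg_mem (I.mul_mem_left a _ (hb m hmj))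

end RowPieces

section ConjugatedPieces

variable {n : ℕ} {R : Type*} [Ring R] {I : TwoSidedIdeal R}

lemma mul_one_sub_vecMulVec_vecMul_mul {τ τ' : Matrix (Fin n) (Fin n) R} (h : τ * τ' = 1)
    (x y : Fin n → R) : τ * (1 - vecMulVec x (y ᵥ* τ)) * τ' = 1 - vecMulVec (τ *ᵥ x) y := by
  rw [mul_sub, mul_one, sub_mul, h, mul_vecMulVec, vecMulVec_mul, vecMul_vecMul, h, vecMul_one]

lemma one_add_vecMulVec_mul_one_sub_vecMulVec {l : Fin n} {c : Fin n → R} (hcl : c l = 0) :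
    (1 + vecMulVec c (Pi.single l 1)) * (1 - vecMulVec c (Pi.single l 1)) = 1 := by
  rw [sub_eq_add_neg, one_add_mul_one_add_of_mul_eq_zero, add_neg_cancel, add_zero]
  rw [mul_neg, vecMulVec_mul_vecMulVec_eq_zero (by rw [single_dotProduct, hcl, mul_zero]),
    neg_zero]

lemma one_sub_vecMulVec_mulVec_single_mem_relElem {l p : Fin n} (hlp : l ≠ p) {c : Fin n → R}
    (hcl : c l = 0) {a : R} (ha : a ∈ I) {q : Fin n → R}
    (hq : q ⬝ᵥ (1 + vecMulVec c (Pi.single l 1)) *ᵥ Pi.single l a = 0) :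
    1 - vecMulVec ((1 + vecMulVec c (Pi.single l 1)) *ᵥ Pi.single l a) q ∈
      (relElem n R I).ofUnits := by
  rw [← mul_one_sub_vecMulVec_vecMul_mul (one_add_vecMulVec_mul_one_sub_vecMulVec hcl)]
  refine mul_mul_mem_ofUnits_relElem
    (one_add_vecMulVec_single_right_mem_ofUnits hcl fun m hml => transv_mem_elemGroup _ _ _ _)
    (one_add_vecMulVec_mul_one_sub_vecMulVec hcl) (one_sub_vecMulVec_single_mem_relElem hlp ha ?_)
  rwa [← dotProduct_single, ← dotProduct_mulVec]

lemma transv_mul_one_sub_vecMulVec_mulVec_single_mem_relElem {i j : Fin n} (hij : i ≠ j)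
    {c : Fin n → R} (hci : c i = 0) (hc : ∀ m, c m ∈ I) {x a : R} {q : Fin n → R}
    (hq : ∀ m, m ≠ j → q m ∈ I) (hx : x - a * q j ∈ I)
    (hqa : q ⬝ᵥ (1 + vecMulVec c (Pi.single i 1)) *ᵥ Pi.single i a = 0) :
    (transv i j hij x : Matrix (Fin n) (Fin n) R) *
      (1 - vecMulVec ((1 + vecMulVec c (Pi.single i 1)) *ᵥ Pi.single i a) q) ∈
        (relElem n R I).ofUnits := by
  have hττ' := one_add_vecMulVec_mul_one_sub_vecMulVec hci
  set τ := 1 + vecMulVec c (Pi.single i 1)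
  have hτ' : 1 - vecMulVec c (Pi.single i 1) = 1 + vecMulVec (-c) (Pi.single i 1) := by
    rw [neg_vecMulVec, ← sub_eq_add_neg]
  have hb : ∀ m, (q ᵥ* τ) m = q m + (q ⬝ᵥ c) * (Pi.single i 1 : Fin n → R) m := fun m => by
    simp [τ, vecMul_add, vecMul_vecMulVec]
  rw [← mul_one_sub_vecMulVec_vecMul_mul hττ', ← mul_assoc, Units.mul_mul_eq_conj_mul]
  refine mul_mem (mul_mem (mul_mul_mem_ofUnits_relElem ⟨_, transv_mem_elemGroup i j hij x, rfl⟩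
    (transv i j hij x).mul_inv (Subgroup.ofUnits_mono preElem_le_relElem
      (one_add_vecMulVec_single_right_mem_ofUnits hci fun m _ =>
        transv_mem_preElem _ _ _ (hc m))))
    (transv_mul_one_sub_vecMulVec_single_mem_relElem hij (fun m hmj => ?_) ?_ ?_))
    (hτ' ▸ Subgroup.ofUnits_mono preElem_le_relElem
      (one_add_vecMulVec_single_right_mem_ofUnits (by simp [hci]) fun m _ =>
        transv_mem_preElem _ _ _ (neg_mem (hc m))))
  · rw [hb]
    obtain rfl | hmi := eq_or_ne m i
    · simpa [dotProduct] using
        I.add_mem (hq m hmj) (sum_mem fun k _ => I.mul_mem_left _ _ (hc k))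
    · simpa [hmi] using hq m hmj
  · simpa [hb, hij.symm] using hx
  · rwa [← dotProduct_single, ← dotProduct_mulVec]

end ConjugatedPieces

section Splitting

variable {n : ℕ} {R : Type*} [Ring R]

/-- The column `B_l` of the sketch above, for idempotents `h m = w m * σ m`. -/
def splitCol (σ h w v : Fin n → R) (l : Fin n) : Fin n → R :=
  Pi.single l (v l) - fun m => σ m * h m * (w l * v l)

variable {σ h w v : Fin n → R}

lemma dotProduct_splitCol (hh : CompleteOrthogonalIdempotents h) (hσ : ∀ m, h m = w m * σ m)
    (l : Fin n) : w ⬝ᵥ splitCol σ h w v l = 0 := by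
  have : ∀ m, w m * (σ m * h m * (w l * v l)) = h m * (w l * v l) := fun m => by
    rw [← mul_assoc, ← mul_assoc (w m), ← hσ, (hh.idem m).eq]
  simp only [splitCol, dotProduct_sub, dotProduct_single]
  simp only [dotProduct, this, ← Finset.sum_mul, hh.complete, one_mul, sub_self]

lemma sum_splitCol (hwv : w ⬝ᵥ v = 0) : ∑ l, splitCol σ h w v l = v := by
  ext m
  simp only [splitCol, Finset.sum_apply, Pi.sub_apply, Finset.sum_sub_distrib, ← Finset.mul_sum]
  rw [← dotProduct, hwv, mul_zero, sub_zero, Finset.sum_pi_single, if_pos (Finset.mem_univ m)]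

lemma splitCol_eq_mulVec (hh : OrthogonalIdempotents h) (hσ : ∀ m, h m = w m * σ m)
    (l : Fin n) :
    splitCol σ h w v l = (1 + vecMulVec (Function.update (fun m => -(σ m * h m * w l)) l 0)
      (Pi.single l 1)) *ᵥ Pi.single l (splitCol σ h w v l l) := by
  rw [add_mulVec, one_mulVec, vecMulVec_mulVec, single_dotProduct, Pi.single_eq_same, one_mul]
  ext m
  obtain rfl | hml := eq_or_ne m l
  · simp
  · have hhl : h m * (w l * σ l) * h l = 0 := by rw [← hσ, hh.ortho hml, zero_mul]
    simp only [splitCol, Pi.add_apply, Pi.sub_apply, Pi.single_eq_same, Pi.single_eq_of_ne hml,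
      Function.update_of_ne hml, Pi.smul_apply, MulOpposite.smul_eq_mul_unop,
      MulOpposite.unop_op]
    calc 0 - σ m * h m * (w l * v l) = -(σ m * h m * w l * v l) +
          σ m * (h m * (w l * σ l) * h l) * (w l * v l) := by rw [hhl]; noncomm_ring
      _ = 0 + -(σ m * h m * w l) * (v l - σ l * h l * (w l * v l)) := by noncomm_ring

lemma one_sub_vecMulVec_sum_eq {B : Fin n → Fin n → R} {q : Fin n → R}
    (hqB : ∀ l, q ⬝ᵥ B l = 0) (i : Fin n) :
    1 - vecMulVec (∑ l, B l) q =
      (1 + ∑ l ∈ Finset.univ.erase i, -vecMulVec (B l) q) * (1 - vecMulVec (B i) q) := by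
  have hsum : vecMulVec (∑ l, B l) q = ∑ l, vecMulVec (B l) q := by
    ext a b; simp [vecMulVec_apply, Matrix.sum_apply, Finset.sum_mul]
  rw [sub_eq_add_neg _ (vecMulVec (B i) q), one_add_mul_one_add_of_mul_eq_zero,
    Finset.sum_erase_add _ _ (Finset.mem_univ i), hsum, Finset.sum_neg_distrib, sub_eq_add_neg]
  rw [Finset.sum_mul]
  exact Finset.sum_eq_zero fun l _ => by rw [neg_mul_neg, vecMulVec_mul_vecMulVec_eq_zero (hqB i)]

end Splitting

theorem IsExchangeRing.transv_mul_one_sub_vecMulVec_mem_relElem {n : ℕ} {R : Type*} [Ring R]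
    {I : TwoSidedIdeal R} (hR : IsExchangeRing R) {i j : Fin n} (hij : i ≠ j) (x : R)
    {v w z : Fin n → R} (hwv : w ⬝ᵥ v = 0) (hwz : w ⬝ᵥ z = 1) (hv : ∀ l, l ≠ i → v l ∈ I)
    (hw : ∀ l, l ≠ j → w l ∈ I) (hx : v i * x * w j - x ∈ I) :
    (transv i j hij x : Matrix (Fin n) (Fin n) R) * (1 - vecMulVec v (x • w)) ∈
      (relElem n R I).ofUnits := by
  obtain ⟨h, hh, hσ⟩ := hR.exists_completeOrthogonalIdempotents hwz
  choose σ hσ using hσ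
  have hqB : ∀ l, (x • w) ⬝ᵥ splitCol σ h w v l = 0 := fun l => by
    rw [smul_dotProduct, dotProduct_splitCol hh hσ, smul_zero]
  have hB := splitCol_eq_mulVec (v := v) hh.toOrthogonalIdempotents hσ
  rw [← sum_splitCol (σ := σ) (h := h) hwv, one_sub_vecMulVec_sum_eq hqB i,
    Units.mul_mul_eq_conj_mul]
  refine mul_mem (mul_mul_mem_ofUnits_relElem ⟨_, transv_mem_elemGroup i j hij x, rfl⟩
    (transv i j hij x).mul_inv (Submonoid.one_add_sum_mem _ ?_ fun l hl => ?_)) ?_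
  · exact fun a _ b _ _ => by simp only [neg_mul_neg, vecMulVec_mul_vecMulVec_eq_zero (hqB b)]
  · have hli : l ≠ i := Finset.ne_of_mem_erase hl
    rw [← sub_eq_add_neg, hB l]
    refine one_sub_vecMulVec_mulVec_single_mem_relElem hli (by simp) ?_ (hB l ▸ hqB l)
    simp only [splitCol, Pi.sub_apply, Pi.single_eq_same]
    exact I.sub_mem (hv l hli) (I.mul_mem_left _ _ (I.mul_mem_left _ _ (hv l hli)))
  · rw [hB i]
    refine transv_mul_one_sub_vecMulVec_mulVec_single_mem_relElem hij (by simp) (fun m => ?_)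
      (fun m hm => I.mul_mem_left x _ (hw m hm)) ?_ (hB i ▸ hqB i)
    · obtain rfl | hmi := eq_or_ne m i
      · simp
      · simpa [hmi] using neg_mem (I.mul_mem_left _ _ (hw i hij))
    · have : x - splitCol σ h w v i i * (x • w) j =
          -(v i * x * w j - x) + σ i * h i * w i * (v i * x * w j) := by
        simp only [splitCol, Pi.sub_apply, Pi.single_eq_same, Pi.smul_apply, smul_eq_mul]
        noncomm_ring
      rw [this]
      exact I.add_mem (neg_mem hx) (I.mul_mem_right _ _ (I.mul_mem_left _ _ (hw i hij)))

section Congruence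

variable {n : ℕ} {R : Type*} [Ring R] {I : TwoSidedIdeal R} {u : (Matrix (Fin n) (Fin n) R)ˣ}

lemma commute_map_single_of_mem_congrSubgroup (hu : u ∈ congrSubgroup n R I) {i j : Fin n}
    (hij : i ≠ j) (y : R) :
    Commute ((u : Matrix (Fin n) (Fin n) R).map (RingCon.mk' I.ringCon))
      (single i j (RingCon.mk' I.ringCon y)) := by
  have := congrArg Units.val (Subgroup.mem_center_iff.mp hu
    (Units.map (RingHom.mapMatrix (RingCon.mk' I.ringCon)).toMonoidHom (transv i j hij y)))
  simp only [Units.val_mul, Units.coe_map, RingHom.toMonoidHom_eq_coe, MonoidHom.coe_coe,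
    coe_transv, map_add, map_one, RingHom.mapMatrix_apply, map_single] at this
  rw [add_mul, mul_add, one_mul, mul_one] at this
  exact (add_left_cancel this).symm

lemma map_eq_scalar_of_mem_congrSubgroup (hu : u ∈ congrSubgroup n R I) (i : Fin n) :
    (u : Matrix (Fin n) (Fin n) R).map (RingCon.mk' I.ringCon) =
      scalar (Fin n) (RingCon.mk' I.ringCon (u i i)) := by
  obtain ⟨r, hr⟩ := mem_range_scalar_of_commute_single
    (M := (u : Matrix (Fin n) (Fin n) R).map (RingCon.mk' I.ringCon)) fun a b hab => by
      simpa using (commute_map_single_of_mem_congrSubgroup hu hab 1).symm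
  have hri := congrFun₂ hr i i
  rw [scalar_apply, diagonal_apply_eq, Matrix.map_apply] at hri
  rw [← hr, hri]

lemma apply_mem_of_mem_congrSubgroup (hu : u ∈ congrSubgroup n R I) {a b : Fin n}
    (hab : a ≠ b) : u a b ∈ I := by
  have := congrFun₂ (map_eq_scalar_of_mem_congrSubgroup hu a) a b
  rw [Matrix.map_apply, scalar_apply, diagonal_apply_ne _ hab] at this
  exact TwoSidedIdeal.mk'_ringCon_eq_zero_iff.mp this

lemma mul_mul_inv_sub_mem_of_mem_congrSubgroup (hu : u ∈ congrSubgroup n R I) {i j : Fin n}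
    (hij : i ≠ j) (x : R) : u i i * x * (u⁻¹ : (Matrix (Fin n) (Fin n) R)ˣ) j j - x ∈ I := by
  have hu' := map_eq_scalar_of_mem_congrSubgroup hu i
  have hcomm := congrFun₂ (commute_map_single_of_mem_congrSubgroup hu hij x).eq i j
  rw [hu', scalar_apply, diagonal_mul, mul_diagonal, single_apply_same] at hcomm
  have hinv : (u : Matrix (Fin n) (Fin n) R).map (RingCon.mk' I.ringCon) *
      (↑u⁻¹ : Matrix (Fin n) (Fin n) R).map (RingCon.mk' I.ringCon) = 1 := by
    rw [← Matrix.map_mul, u.mul_inv, Matrix.map_one _ (map_zero _) (map_one _)]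
  rw [hu', map_eq_scalar_of_mem_congrSubgroup (inv_mem hu) j, ← map_mul] at hinv
  replace hinv := congrFun₂ hinv j j
  rw [scalar_apply, diagonal_apply_eq, one_apply_eq] at hinv
  rw [← TwoSidedIdeal.mk'_ringCon_eq_zero_iff, map_sub, map_mul, map_mul, hcomm, mul_assoc, hinv,
    mul_one, sub_self]

end Congruence

section Commutators

variable {n : ℕ} {R : Type*} [Ring R] {I : TwoSidedIdeal R}
open scoped commutatorElement

lemma coe_commutatorElement_transv_eq (u : (Matrix (Fin n) (Fin n) R)ˣ) {i j : Fin n}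
    (hij : i ≠ j) (x : R) :
    ((⁅transv i j hij x, u⁆ : (Matrix (Fin n) (Fin n) R)ˣ) : Matrix (Fin n) (Fin n) R) =
      transv i j hij x * (1 - vecMulVec (fun l => (u : Matrix (Fin n) (Fin n) R) l i)
        (x • fun l => ((u⁻¹ : (Matrix (Fin n) (Fin n) R)ˣ) : Matrix (Fin n) (Fin n) R) j l)) := by
  rw [commutatorElement_def, Units.val_mul, Units.val_mul, Units.val_mul, coe_transv_inv,
    mul_assoc, mul_assoc, add_mul, one_mul, mul_add, u.mul_inv, sub_eq_add_neg]
  congr 2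
  ext a b
  simp [Matrix.mul_apply, single_apply, vecMulVec_apply, ite_and]

lemma commutatorElement_transv_mem_relElem (hR : IsExchangeRing R) {i j : Fin n} (hij : i ≠ j)
    (x : R) {u : (Matrix (Fin n) (Fin n) R)ˣ} (hu : u ∈ congrSubgroup n R I) :
    ⁅transv i j hij x, u⁆ ∈ relElem n R I := by
  refine Subgroup.mem_of_mem_val_ofUnits _ ?_
  rw [coe_commutatorElement_transv_eq]
  refine hR.transv_mul_one_sub_vecMulVec_mem_relElem hij x
    (z := fun l => (u : Matrix (Fin n) (Fin n) R) l j) ?_ ?_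
    (fun l hl => apply_mem_of_mem_congrSubgroup hu hl)
    (fun l hl => apply_mem_of_mem_congrSubgroup (inv_mem hu) hl.symm)
    (mul_mul_inv_sub_mem_of_mem_congrSubgroup hu hij x)
  · simpa [Matrix.mul_apply, one_apply_ne hij.symm, dotProduct] using congrFun₂ u.inv_mul j i
  · simpa [Matrix.mul_apply, dotProduct] using congrFun₂ u.inv_mul j j

end Commutators

theorem commutator_congr_le_relElem_general {n : ℕ} (R : Type*) [Ring R]
    (hR : IsExchangeRing R) (I : TwoSidedIdeal R) :
    ⁅elemGroup n R, congrSubgroup n R I⁆ ≤ relElem n R I :=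
  Subgroup.commutator_closure_le (fun _ hg _ hk => conj_mem_relElem hg hk) <| by
    rintro _ ⟨i, j, hij, x, rfl⟩ u hu
    exact commutatorElement_transv_mem_relElem hR hij x hu

theorem commutator_congr_le_relElem {n : ℕ} (R : Type*) [Ring R]
    (hR : IsExchangeRing R) (hn : 1 ≤ n) (I : TwoSidedIdeal R) :
    ⁅elemGroup n R, congrSubgroup n R I⁆ ≤ relElem n R I :=
  commutator_congr_le_relElem_general R hR I
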